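/- Let H be a Hilbert space, V : ℝ → ℝ be C² with Lipschitz second derivative, λ⁽⁰⁾ ∈ l²(ℤ≥0) with V'(λ_n⁽⁰⁾) = 0 and V''(λ_n⁽⁰⁾) ≥ c > 0 for all n. Define T_ε(λ) = (εA + V''(λ⁽⁰⁾))⁻¹[V''(λ⁽⁰⁾)λ⁽⁰⁾ + V'(λ⁽⁰⁾) - V'(λ) - V''(λ⁽⁰⁾)(λ⁽⁰⁾ - λ)] where V' acts componentwise. Then there is r > 0 and ε₀ > 0 such that for 0 ≤ ε ≤ ε₀, T_ε is a contraction on the closed ball of radius r around λ⁽⁰⁾ in l², and hence has a unique fixed point λ(ε), which solves εAλ + V'(λ) = 0. -/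

import Mathlib

open Finset Filter Set Topology

/-- The discrete radial Laplacian `(Aλ)_n = (2n+1)λ_n - (n+1)λ_{n+1} - n λ_{n-1}`. -/
noncomputable def Aop (l : ℕ → ℝ) (n : ℕ) : ℝ :=
  (2 * n + 1) * l n - (n + 1) * l (n + 1) - n * l (n - 1)

private lemma gms_diff (V : ℝ → ℝ) (hV : ContDiff ℝ 2 V) :
    Differentiable ℝ V ∧ Differentiable ℝ (deriv V) ∧ Continuous (deriv (deriv V)) := by
  have h2 : ContDiff ℝ ((1 : ℕ∞) + 1) V := hV.of_le (by norm_num)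
  have h3 := (contDiff_succ_iff_deriv.mp h2).2.2
  have h4 := contDiff_one_iff_deriv.mp h3
  exact ⟨hV.differentiable (by norm_num), h4.1, h4.2⟩

private lemma gms_abs_le (x b : ℝ) (hb : 0 ≤ b) (h : x ^ 2 ≤ b ^ 2) : |x| ≤ b := by
  rw [abs_le]; constructor <;> nlinarith

private lemma gms_monoF (V : ℝ → ℝ) (hV : ContDiff ℝ 2 V) (κ lo hi : ℝ)
    (h : ∀ z ∈ Icc lo hi, κ ≤ deriv (deriv V) z) :
    MonotoneOn (fun t => deriv V t - κ * t) (Icc lo hi) := by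
  have hd := (gms_diff V hV).2.1
  have hder : ∀ x : ℝ, HasDerivAt (fun t => deriv V t - κ * t) (deriv (deriv V) x - κ) x := by
    intro x
    have h1 : HasDerivAt (fun t : ℝ => κ * t) κ x := by
      simpa using (hasDerivAt_id x).const_mul κ
    exact ((hd x).hasDerivAt).sub h1
  apply monotoneOn_of_deriv_nonneg (convex_Icc lo hi)
  · exact fun x _ => ((hder x).continuousAt).continuousWithinAt
  · exact fun x _ => ((hder x).differentiableAt).differentiableWithinAt
  · intro x hx
    rw [(hder x).deriv]
    have hx' : x ∈ Icc lo hi := interior_subset hx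
    linarith [h x hx']

private lemma gms_mono_mul (V : ℝ → ℝ) (hV : ContDiff ℝ 2 V) (κ lo hi : ℝ)
    (h : ∀ z ∈ Icc lo hi, κ ≤ deriv (deriv V) z) :
    ∀ x ∈ Icc lo hi, ∀ y ∈ Icc lo hi,
      κ * (y - x) ^ 2 ≤ (deriv V y - deriv V x) * (y - x) := by
  intro x hx y hy
  have hm := gms_monoF V hV κ lo hi h
  rcases le_total x y with hxy | hxy
  · have := hm hx hy hxy
    simp only at this
    nlinarith
  · have := hm hy hx hxy
    simp only at this
    nlinarith

private lemma gms_taylor (V : ℝ → ℝ) (hV : ContDiff ℝ 2 V) (κ lo hi : ℝ)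
    (h : ∀ z ∈ Icc lo hi, κ ≤ deriv (deriv V) z) :
    ∀ x ∈ Icc lo hi, ∀ y ∈ Icc lo hi,
      V x + deriv V x * (y - x) + κ / 2 * (y - x) ^ 2 ≤ V y := by
  intro x hx y hy
  have hV1 := (gms_diff V hV).1
  have hm := gms_monoF V hV κ lo hi h
  set φ : ℝ → ℝ := fun t => V t - V x - deriv V x * (t - x) - κ / 2 * (t - x) ^ 2 with hφdef
  have hφd : ∀ t : ℝ, HasDerivAt φ (deriv V t - deriv V x - κ * (t - x)) t := by
    intro t
    have h1 : HasDerivAt (fun t => V t - V x) (deriv V t) t := ((hV1 t).hasDerivAt).sub_const _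
    have h2 : HasDerivAt (fun t : ℝ => deriv V x * (t - x)) (deriv V x) t := by
      simpa using ((hasDerivAt_id t).sub_const x).const_mul (deriv V x)
    have h3 : HasDerivAt (fun t : ℝ => κ / 2 * (t - x) ^ 2) (κ * (t - x)) t := by
      have := (((hasDerivAt_id t).sub_const x).pow 2).const_mul (κ / 2)
      refine this.congr_deriv ?_
      simp [id]
      ring
    exact (h1.sub h2).sub h3
  have hφx : φ x = 0 := by simp [hφdef]
  have key : 0 ≤ φ y := by
    rcases le_total x y with hxy | hxy
    · have hmono : MonotoneOn φ (Icc x hi) := by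
        apply monotoneOn_of_deriv_nonneg (convex_Icc x hi)
        · exact fun t _ => ((hφd t).continuousAt).continuousWithinAt
        · exact fun t _ => ((hφd t).differentiableAt).differentiableWithinAt
        · intro t ht
          rw [interior_Icc] at ht
          rw [(hφd t).deriv]
          have ht' : t ∈ Icc lo hi := ⟨le_trans hx.1 ht.1.le, ht.2.le⟩
          have := hm hx ht' ht.1.le
          simp only at this
          linarith
      have := hmono (⟨le_refl x, hx.2⟩ : x ∈ Icc x hi) (⟨hxy, hy.2⟩ : y ∈ Icc x hi) hxy
      rw [hφx] at this
      exact this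
    · have hanti : AntitoneOn φ (Icc lo x) := by
        apply antitoneOn_of_deriv_nonpos (convex_Icc lo x)
        · exact fun t _ => ((hφd t).continuousAt).continuousWithinAt
        · exact fun t _ => ((hφd t).differentiableAt).differentiableWithinAt
        · intro t ht
          rw [interior_Icc] at ht
          rw [(hφd t).deriv]
          have ht' : t ∈ Icc lo hi := ⟨ht.1.le, le_trans ht.2.le hx.2⟩
          have := hm ht' hx ht.2.le
          simp only at this
          linarith
      have := hanti (⟨hy.1, hxy⟩ : y ∈ Icc lo x) (⟨hx.1, le_refl x⟩ : x ∈ Icc lo x) hxy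
      rw [hφx] at this
      exact this
  simp only [hφdef] at key
  linarith

private lemma gms_sbp (d : ℕ → ℝ) : ∀ N : ℕ, ∑ n ∈ range (N + 1), Aop d n * d n
    = ∑ n ∈ range N, ((n : ℝ) + 1) * (d n - d (n + 1)) ^ 2
      + ((N : ℝ) + 1) * d N * (d N - d (N + 1)) := by
  intro N
  induction N with
  | zero => simp [Aop]; ring
  | succ N ih =>
      rw [Finset.sum_range_succ, ih, Finset.sum_range_succ]
      simp only [Aop, Nat.add_sub_cancel]
      push_cast
      ring

private lemma gms_small (u : ℕ → ℝ) (hu : Summable u) (hnn : ∀ n, 0 ≤ u n)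
    (η : ℝ) (hη : 0 < η) (M : ℕ) :
    ∃ N, M ≤ N ∧ ((N : ℝ) + 1) * (u N + u (N + 1)) ≤ η := by
  by_contra hcon
  push_neg at hcon
  have hv : Summable (fun n => u n + u (n + 1)) := hu.add ((summable_nat_add_iff 1).mpr hu)
  have hvM : Summable (fun n => u (n + M) + u (n + M + 1)) := by
    have := (summable_nat_add_iff (f := fun n => u n + u (n + 1)) M).mpr hv
    simpa using this
  have hcomp : Summable (fun n : ℕ => η / (((n : ℝ) + M) + 1)) := by
    apply Summable.of_nonneg_of_le (fun n => by positivity) (fun n => ?_) hvM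
    have hc := hcon (n + M) (Nat.le_add_left M n)
    have hpos : (0 : ℝ) < ((n : ℝ) + M) + 1 := by positivity
    rw [div_le_iff₀ hpos]
    push_cast at hc ⊢
    nlinarith [hc]
  have h1 : Summable (fun n : ℕ => 1 / (((n : ℝ) + M) + 1)) := by
    have h2 := hcomp.mul_left η⁻¹
    apply h2.congr
    intro n
    field_simp
  have h3 : Summable (fun n : ℕ => (fun k : ℕ => 1 / (k : ℝ)) (n + (M + 1))) := by
    apply h1.congr
    intro n
    push_cast
    ring_nf
  have h4 : Summable (fun n : ℕ => 1 / (n : ℝ)) := (summable_nat_add_iff (M + 1)).mp h3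
  exact Real.not_summable_one_div_natCast h4

private lemma gms_hasDeriv (V : ℝ → ℝ) (hV : ContDiff ℝ 2 V) (ε : ℝ) (N n : ℕ)
    (hn : n < N + 1) (m : ℕ → ℝ) :
    HasDerivAt (fun t => ε / 2 * ∑ k ∈ range (N + 1),
        ((k : ℝ) + 1) * (Function.update m n t k - Function.update m n t (k + 1)) ^ 2
      + ∑ k ∈ range (N + 1), V (Function.update m n t k))
      (ε * Aop m n + deriv V (m n)) (m n) := by
  have hV1 := (gms_diff V hV).1
  have hu : ∀ k : ℕ, HasDerivAt (fun t => Function.update m n t k)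
      (if k = n then (1 : ℝ) else 0) (m n) := by
    intro k
    rcases eq_or_ne k n with hk | hk
    · subst hk
      have hfn : (fun t => Function.update m k t k) = fun t => t := by
        funext t; simp
      rw [hfn, if_pos rfl]
      exact hasDerivAt_id _
    · have hfn : (fun t => Function.update m n t k) = fun _ => m k := by
        funext t; simp [Function.update_apply, hk]
      rw [hfn, if_neg hk]
      exact hasDerivAt_const _ _
  have hq : ∀ k ∈ range (N + 1), HasDerivAt
      (fun t => ((k : ℝ) + 1) * (Function.update m n t k - Function.update m n t (k + 1)) ^ 2)
      (((k : ℝ) + 1) * (2 * (m k - m (k + 1)) *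
        ((if k = n then (1 : ℝ) else 0) - (if k + 1 = n then (1 : ℝ) else 0)))) (m n) := by
    intro k _
    have h1 := (((hu k).sub (hu (k + 1))).pow 2).const_mul ((k : ℝ) + 1)
    simp only [Function.update_eq_self, pow_one, Nat.reduceSubDiff] at h1
    refine h1.congr_deriv ?_
    simp
  have hv : ∀ k ∈ range (N + 1), HasDerivAt (fun t => V (Function.update m n t k))
      (if k = n then deriv V (m n) else 0) (m n) := by
    intro k _
    rcases eq_or_ne k n with hk | hk
    · subst hk
      have hfn : (fun t => V (Function.update m k t k)) = V := by
        funext t; simp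
      rw [hfn, if_pos rfl]
      exact (hV1 (m k)).hasDerivAt
    · have hfn : (fun t => V (Function.update m n t k)) = fun _ => V (m k) := by
        funext t; simp [Function.update_apply, hk]
      rw [hfn, if_neg hk]
      exact hasDerivAt_const _ _
  have hQ := (HasDerivAt.fun_sum hq).const_mul (ε / 2)
  have hVs := HasDerivAt.fun_sum hv
  have hsum := hQ.add hVs
  refine hsum.congr_deriv ?_
  have hVval : ∑ k ∈ range (N + 1), (if k = n then deriv V (m n) else 0) = deriv V (m n) := by
    rw [Finset.sum_ite_eq' (range (N + 1)) n (fun _ => deriv V (m n))]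
    simp [Finset.mem_range.mpr hn]
  have hsplit : ∀ k : ℕ, ((k : ℝ) + 1) * (2 * (m k - m (k + 1)) *
        ((if k = n then (1 : ℝ) else 0) - (if k + 1 = n then (1 : ℝ) else 0)))
      = (if k = n then 2 * ((k : ℝ) + 1) * (m k - m (k + 1)) else 0)
        - (if k + 1 = n then 2 * ((k : ℝ) + 1) * (m k - m (k + 1)) else 0) := by
    intro k
    by_cases h1 : k = n <;> by_cases h2 : k + 1 = n <;> simp [h1, h2] <;> ring
  have hQval : ∑ k ∈ range (N + 1), ((k : ℝ) + 1) * (2 * (m k - m (k + 1)) *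
        ((if k = n then (1 : ℝ) else 0) - (if k + 1 = n then (1 : ℝ) else 0)))
      = 2 * ((n : ℝ) + 1) * (m n - m (n + 1))
        - (if n = 0 then 0 else 2 * (((n - 1 : ℕ) : ℝ) + 1) * (m (n - 1) - m n)) := by
    rw [Finset.sum_congr rfl (fun k _ => hsplit k), Finset.sum_sub_distrib]
    congr 1
    · rw [Finset.sum_ite_eq' (range (N + 1)) n
        (fun k => 2 * ((k : ℝ) + 1) * (m k - m (k + 1)))]
      simp [Finset.mem_range.mpr hn]
    · cases n with
      | zero => simp
      | succ j =>
          have : ∀ k, (if k + 1 = j + 1 then 2 * ((k : ℝ) + 1) * (m k - m (k + 1)) else 0)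
              = (if k = j then 2 * ((k : ℝ) + 1) * (m k - m (k + 1)) else 0) := by
            intro k; simp [Nat.succ_inj]
          rw [Finset.sum_congr rfl (fun k _ => this k),
            Finset.sum_ite_eq' (range (N + 1)) j (fun k => 2 * ((k : ℝ) + 1) * (m k - m (k + 1)))]
          have hj : j ∈ range (N + 1) := Finset.mem_range.mpr (by omega)
          simp [hj]
  rw [hVval, hQval]
  cases n with
  | zero => simp [Aop]; ring
  | succ j =>
      simp only [Aop, Nat.add_sub_cancel, if_neg (Nat.succ_ne_zero j)]
      push_cast
      ring


set_option maxHeartbeats 2000000 in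
/-- Contraction-mapping existence of noncommutative solitons: if `V` is `C²`
with Lipschitz second derivative, `λ⁽⁰⁾ ∈ l²` with `V'(λ_n⁽⁰⁾) = 0` and
`V''(λ_n⁽⁰⁾) ≥ c > 0`, then there are `r > 0` and `ε₀ > 0` such that for every
`0 ≤ ε ≤ ε₀` the map `T_ε` has a unique fixed point in the `l²`-ball of radius
`r` around `λ⁽⁰⁾`, i.e. a unique `λ` in that ball solving `εAλ + V'(λ) = 0`. -/
theorem gms_soliton_existence (V : ℝ → ℝ) (hV : ContDiff ℝ 2 V)
    (L : NNReal) (hLip : LipschitzWith L (deriv (deriv V)))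
    (l0 : ℕ → ℝ) (hl0 : Summable fun n => (l0 n) ^ 2)
    (c : ℝ) (hc : 0 < c)
    (hcrit : ∀ n, deriv V (l0 n) = 0)
    (hpos : ∀ n, c ≤ deriv (deriv V) (l0 n)) :
    ∃ r > (0 : ℝ), ∃ ε₀ > (0 : ℝ), ∀ ε : ℝ, 0 ≤ ε → ε ≤ ε₀ →
      ∃! l : ℕ → ℝ, (Summable fun n => (l n - l0 n) ^ 2) ∧
        (∑' n : ℕ, (l n - l0 n) ^ 2 ≤ r ^ 2) ∧
        ∀ n, ε * Aop l n + deriv V (l n) = 0 := by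
  classical
  obtain ⟨hV1, hVd, hVcc⟩ := gms_diff V hV
  -- Lipschitz bound for the second derivative
  have hLipR : ∀ x y : ℝ, |deriv (deriv V) x - deriv (deriv V) y| ≤ (L : ℝ) * |x - y| := by
    intro x y
    have := hLip.dist_le_mul x y
    rwa [Real.dist_eq, Real.dist_eq] at this
  set Λ : ℝ := (L : ℝ) + 1 with hΛdef
  have hΛ : 0 < Λ := by positivity
  set r : ℝ := c / (2 * Λ) with hrdef
  have hr : 0 < r := by positivity
  have hΛr : Λ * r = c / 2 := by
    rw [hrdef]; field_simp
  -- second derivative is at least c/2 on r-balls around the l0 n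
  have hppr : ∀ (n : ℕ) (z : ℝ), |z - l0 n| ≤ r → c / 2 ≤ deriv (deriv V) z := by
    intro n z hz
    have h1 := hLipR (l0 n) z
    have h2 := hpos n
    have h3 : (L : ℝ) * |l0 n - z| ≤ Λ * r := by
      have hL : (L : ℝ) ≤ Λ := by rw [hΛdef]; linarith
      have : |l0 n - z| ≤ r := by rwa [abs_sub_comm]
      have h4 : (L : ℝ) * |l0 n - z| ≤ (L : ℝ) * r :=
        mul_le_mul_of_nonneg_left this (by positivity)
      have h5 : (L : ℝ) * r ≤ Λ * r := mul_le_mul_of_nonneg_right hL hr.le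
      linarith
    rw [hΛr] at h3
    have := abs_le.mp h1
    linarith [this.1, this.2]
  have hIccppr : ∀ n : ℕ, ∀ z ∈ Icc (l0 n - r) (l0 n + r), c / 2 ≤ deriv (deriv V) z := by
    intro n z hz
    exact hppr n z (abs_le.mpr ⟨by linarith [hz.1], by linarith [hz.2]⟩)
  -- choose the truncation index K
  obtain ⟨K, hK⟩ : ∃ K : ℕ, ∑' k : ℕ, (l0 (k + K)) ^ 2 ≤ r ^ 2 / 4 := by
    have ht := tendsto_sum_nat_add (fun n => (l0 n) ^ 2)
    have := ht.eventually_lt_const (show (0 : ℝ) < r ^ 2 / 4 by positivity)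
    rcases (this.and (eventually_ge_atTop 0)).exists with ⟨K, hK1, _⟩
    exact ⟨K, hK1.le⟩
  have hshift : ∀ K' : ℕ, Summable (fun k : ℕ => (l0 (k + K')) ^ 2) := by
    intro K'; exact (summable_nat_add_iff K').mpr hl0
  have htail_pt : ∀ n, K ≤ n → (l0 n) ^ 2 ≤ r ^ 2 / 4 := by
    intro n hn
    have h1 : (l0 ((n - K) + K)) ^ 2 ≤ ∑' k : ℕ, (l0 (k + K)) ^ 2 :=
      Summable.le_tsum (hshift K) (n - K) (fun j _ => sq_nonneg _)
    rw [Nat.sub_add_cancel hn] at h1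
    linarith
  have habs : ∀ n, K ≤ n → |l0 n| ≤ r / 2 := by
    intro n hn
    have := htail_pt n hn
    rw [abs_le]
    constructor <;> nlinarith
  -- the limit of l0 is 0, hence deriv V 0 = 0
  have hV'0 : deriv V 0 = 0 := by
    have hsq : Tendsto (fun n => (l0 n) ^ 2) atTop (𝓝 0) := hl0.tendsto_atTop_zero
    have habs0 : Tendsto (fun n => |l0 n|) atTop (𝓝 0) := by
      have h1 := (Real.continuous_sqrt.tendsto 0).comp hsq
      simp only [Function.comp_def, Real.sqrt_eq_zero le_rfl] at h1
      have h2 : (fun n => Real.sqrt ((l0 n) ^ 2)) = fun n => |l0 n| := by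
        funext n; rw [Real.sqrt_sq_eq_abs]
      rwa [h2, Real.sqrt_zero] at h1
    have htz : Tendsto l0 atTop (𝓝 0) :=
      (tendsto_zero_iff_abs_tendsto_zero l0).mpr habs0
    have h3 : Tendsto (fun n => deriv V (l0 n)) atTop (𝓝 (deriv V 0)) :=
      (hVd.continuous.tendsto 0).comp htz
    have h4 : Tendsto (fun n : ℕ => deriv V (l0 n)) atTop (𝓝 0) := by
      have : (fun n : ℕ => deriv V (l0 n)) = fun _ => (0 : ℝ) := by
        funext n; exact hcrit n
      rw [this]; exact tendsto_const_nhds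
    exact tendsto_nhds_unique h3 h4
  -- the truncated anchor point
  set a : ℕ → ℝ := fun n => if n < K then l0 n else 0 with hadef
  have haV : ∀ n, deriv V (a n) = 0 := by
    intro n
    rw [hadef]
    by_cases hn : n < K
    · simp only [if_pos hn]; exact hcrit n
    · simp only [if_neg hn]; exact hV'0
  have haIcc : ∀ n, |a n - l0 n| ≤ r / 2 := by
    intro n
    rw [hadef]
    by_cases hn : n < K
    · simp [if_pos hn, hr.le]; positivity
    · simp only [if_neg hn, zero_sub, abs_neg]
      exact habs n (le_of_not_gt hn)
  -- tail sums of a - l0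
  have hasum : ∀ N : ℕ, K ≤ N → ∑ i ∈ range (N + 1), (a i - l0 i) ^ 2 ≤ r ^ 2 / 4 := by
    intro N hKN
    have hsub : Finset.Ico K (N + 1) ⊆ range (N + 1) := by
      intro i hi
      rw [Finset.mem_range]; rw [Finset.mem_Ico] at hi; exact hi.2
    have hzero : ∀ i ∈ range (N + 1), i ∉ Finset.Ico K (N + 1) → (a i - l0 i) ^ 2 = 0 := by
      intro i hi hni
      rw [Finset.mem_range] at hi
      rw [Finset.mem_Ico, not_and_or] at hni
      have hiK : i < K := by omega
      rw [hadef]; simp [if_pos hiK]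
    rw [← Finset.sum_subset hsub hzero]
    have heq : ∑ i ∈ Finset.Ico K (N + 1), (a i - l0 i) ^ 2
        = ∑ i ∈ Finset.Ico K (N + 1), (l0 i) ^ 2 := by
      apply Finset.sum_congr rfl
      intro i hi
      rw [Finset.mem_Ico] at hi
      rw [hadef]
      simp [if_neg (not_lt.mpr hi.1)]
    rw [heq, Finset.sum_Ico_eq_sum_range]
    calc ∑ i ∈ range (N + 1 - K), (l0 (K + i)) ^ 2
        = ∑ i ∈ range (N + 1 - K), (l0 (i + K)) ^ 2 := by
          apply Finset.sum_congr rfl; intro i _; rw [Nat.add_comm]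
      _ ≤ ∑' k : ℕ, (l0 (k + K)) ^ 2 := (hshift K).sum_le_tsum _ (fun k _ => sq_nonneg _)
      _ ≤ r ^ 2 / 4 := hK
  -- the finite energy of the anchor
  set QK : ℝ := ∑ k ∈ range K, ((k : ℝ) + 1) * (a k - a (k + 1)) ^ 2 with hQKdef
  have hQK0 : 0 ≤ QK := Finset.sum_nonneg (fun k _ => by positivity)
  have hQa : ∀ N : ℕ, K ≤ N →
      ∑ k ∈ range (N + 1), ((k : ℝ) + 1) * (a k - a (k + 1)) ^ 2 = QK := by
    intro N hKN
    rw [hQKdef]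
    apply (Finset.sum_subset (Finset.range_subset_range.mpr (by omega)) ?_).symm
    intro k _ hk
    rw [Finset.mem_range, not_lt] at hk
    have h1 : a k = 0 := by rw [hadef]; simp [if_neg (not_lt.mpr hk)]
    have h2 : a (k + 1) = 0 := by rw [hadef]; simp [if_neg (by omega : ¬ k + 1 < K)]
    rw [h1, h2]
    ring
  -- choice of ε₀
  set ε₀ : ℝ := c * r ^ 2 / (32 * (QK + 1)) with hε₀def
  have hε₀ : 0 < ε₀ := by positivity
  refine ⟨r, hr, ε₀, hε₀, ?_⟩
  intro ε hε0 hεle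
  have hεQK : ε * QK ≤ c * r ^ 2 / 32 := by
    have h1 : ε * QK ≤ ε₀ * QK := mul_le_mul_of_nonneg_right hεle hQK0
    have h2 : ε₀ * QK ≤ c * r ^ 2 / 32 := by
      rw [hε₀def, div_mul_eq_mul_div, div_le_div_iff₀ (by positivity) (by norm_num)]
      linarith [mul_nonneg hc.le (sq_nonneg r)]
    linarith
  -- existence of minimizers of the truncated energy
  have hexists : ∀ N : ℕ, K ≤ N → ∃ m : ℕ → ℝ,
      (∀ k, N < k → m k = 0) ∧
      (∑ i ∈ range (N + 1), (m i - l0 i) ^ 2 ≤ r ^ 2) ∧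
      (∀ n, n < N + 1 → ε * Aop m n + deriv V (m n) = 0) := by
    intro N hKN
    set C : Set (ℕ → ℝ) := {l | (∀ k, N < k → l k = 0) ∧
      ∑ i ∈ range (N + 1), (l i - l0 i) ^ 2 ≤ r ^ 2} with hCdef
    have haC : a ∈ C := by
      constructor
      · intro k hk
        rw [hadef]
        simp [if_neg (by omega : ¬ k < K)]
      · exact le_trans (hasum N hKN) (by linarith [sq_nonneg r])
    -- compactness
    have hsumc : Continuous fun l : ℕ → ℝ => ∑ i ∈ range (N + 1), (l i - l0 i) ^ 2 := by
      apply continuous_finset_sum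
      intro i _
      exact ((continuous_apply i).sub continuous_const).pow 2
    have hCclosed : IsClosed C := by
      have h1 : IsClosed {l : ℕ → ℝ | ∀ k, N < k → l k = 0} := by
        have : {l : ℕ → ℝ | ∀ k, N < k → l k = 0} = ⋂ k, {l : ℕ → ℝ | N < k → l k = 0} := by
          ext l; simp
        rw [this]
        apply isClosed_iInter
        intro k
        by_cases hk : N < k
        · have : {l : ℕ → ℝ | N < k → l k = 0} = (fun l : ℕ → ℝ => l k) ⁻¹' {0} := by
            ext l; simp [hk]
          rw [this]
          exact isClosed_singleton.preimage (continuous_apply k)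
        · have : {l : ℕ → ℝ | N < k → l k = 0} = Set.univ := by
            ext l; simp [hk]
          rw [this]; exact isClosed_univ
      have h2 : IsClosed {l : ℕ → ℝ | ∑ i ∈ range (N + 1), (l i - l0 i) ^ 2 ≤ r ^ 2} :=
        isClosed_le hsumc continuous_const
      exact h1.inter h2
    have hCcpt : IsCompact C := by
      apply IsCompact.of_isClosed_subset
        (isCompact_univ_pi (fun n => isCompact_Icc
          (a := -(|l0 n| + r)) (b := |l0 n| + r))) hCclosed
      intro l hl
      intro i _
      rcases hl with ⟨hl1, hl2⟩
      simp only [Set.mem_Icc]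
      by_cases hi : i < N + 1
      · have hone : (l i - l0 i) ^ 2 ≤ r ^ 2 := by
          refine le_trans (Finset.single_le_sum (f := fun j => (l j - l0 j) ^ 2)
            (fun j _ => sq_nonneg _) (Finset.mem_range.mpr hi)) hl2
        have habs' : |l i - l0 i| ≤ r := gms_abs_le _ _ hr.le hone
        have := abs_le.mp habs'
        have h3 := abs_le.mp (le_refl |l0 i|)
        constructor
        · linarith [neg_abs_le (l0 i), this.1]
        · linarith [le_abs_self (l0 i), this.2]
      · rw [hl1 i (by omega)]
        have h0 : (0:ℝ) ≤ |l0 i| + r := by positivity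
        constructor <;> linarith
    -- the energy functional
    set E : (ℕ → ℝ) → ℝ := fun l => ε / 2 * ∑ k ∈ range (N + 1), ((k : ℝ) + 1) * (l k - l (k + 1)) ^ 2
      + ∑ k ∈ range (N + 1), V (l k) with hEdef
    have hEc : Continuous E := by
      rw [hEdef]
      apply Continuous.add
      · apply Continuous.mul continuous_const
        apply continuous_finset_sum
        intro k _
        exact (continuous_const.mul (((continuous_apply k).sub (continuous_apply (k + 1))).pow 2))
      · apply continuous_finset_sum
        intro k _
        exact hV.continuous.comp (continuous_apply k)
    obtain ⟨m, hmC, hmin⟩ := hCcpt.exists_isMinOn ⟨a, haC⟩ hEc.continuousOn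
    have hmin' : ∀ x ∈ C, E m ≤ E x := fun x hx => hmin hx
    obtain ⟨hm0, hmsum⟩ := hmC
    have hmIcc : ∀ i, i < N + 1 → |m i - l0 i| ≤ r := by
      intro i hi
      apply gms_abs_le _ _ hr.le
      exact le_trans (Finset.single_le_sum (f := fun j => (m j - l0 j) ^ 2)
        (fun j _ => sq_nonneg _) (Finset.mem_range.mpr hi)) hmsum
    -- membership in the convexity intervals
    have haIcc' : ∀ k, a k ∈ Icc (l0 k - r) (l0 k + r) := by
      intro k
      have := abs_le.mp (haIcc k)
      exact ⟨by linarith [this.1], by linarith [this.2]⟩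
    have hmIcc' : ∀ k, k < N + 1 → m k ∈ Icc (l0 k - r) (l0 k + r) := by
      intro k hk
      have := abs_le.mp (hmIcc k hk)
      exact ⟨by linarith [this.1], by linarith [this.2]⟩
    -- the strict bound
    have hstrict : ∑ i ∈ range (N + 1), (m i - l0 i) ^ 2 < r ^ 2 := by
      rcases lt_or_eq_of_le hmsum with h | h
      · exact h
      exfalso
      have hEma : E m ≤ E a := hmin' a haC
      have hQm : 0 ≤ ∑ k ∈ range (N + 1), ((k : ℝ) + 1) * (m k - m (k + 1)) ^ 2 :=
        Finset.sum_nonneg (fun k _ => by positivity)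
      have hVterm : ∀ k ∈ range (N + 1), V (a k) + c / 4 * (m k - a k) ^ 2 ≤ V (m k) := by
        intro k hk
        have ht := gms_taylor V hV (c / 2) (l0 k - r) (l0 k + r) (hIccppr k)
          (a k) (haIcc' k) (m k) (hmIcc' k (Finset.mem_range.mp hk))
        rw [haV k] at ht
        calc V (a k) + c / 4 * (m k - a k) ^ 2
            = V (a k) + 0 * (m k - a k) + c / 2 / 2 * (m k - a k) ^ 2 := by ring
          _ ≤ V (m k) := ht
      have hsum1 : ∑ k ∈ range (N + 1), V (a k)
          + c / 4 * ∑ k ∈ range (N + 1), (m k - a k) ^ 2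
          ≤ ∑ k ∈ range (N + 1), V (m k) := by
        have := Finset.sum_le_sum hVterm
        rw [Finset.sum_add_distrib, ← Finset.mul_sum] at this
        linarith
      have hay : ∑ i ∈ range (N + 1), (a i - l0 i) ^ 2 ≤ r ^ 2 / 4 := hasum N hKN
      have hma : r ^ 2 / 4 ≤ ∑ k ∈ range (N + 1), (m k - a k) ^ 2 := by
        have hpt : ∀ k ∈ range (N + 1),
            (m k - l0 k) ^ 2 / 2 - (a k - l0 k) ^ 2 ≤ (m k - a k) ^ 2 := by
          intro k _
          nlinarith [sq_nonneg ((m k - l0 k) - 2 * (a k - l0 k))]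
        have h1 := Finset.sum_le_sum hpt
        rw [Finset.sum_sub_distrib] at h1
        have h2 : ∑ k ∈ range (N + 1), (m k - l0 k) ^ 2 / 2
            = (∑ k ∈ range (N + 1), (m k - l0 k) ^ 2) / 2 := by
          rw [Finset.sum_div]
        rw [h2, h] at h1
        linarith
      have hEm_lb : ∑ k ∈ range (N + 1), V (a k) + c / 4 * (r ^ 2 / 4) ≤ E m := by
        rw [hEdef]
        simp only
        have h1 : 0 ≤ ε / 2 * ∑ k ∈ range (N + 1), ((k : ℝ) + 1) * (m k - m (k + 1)) ^ 2 := by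
          apply mul_nonneg (by linarith) hQm
        have h2 : c / 4 * (r ^ 2 / 4) ≤ c / 4 * ∑ k ∈ range (N + 1), (m k - a k) ^ 2 :=
          mul_le_mul_of_nonneg_left hma (by linarith)
        linarith
      have hEa_ub : E a ≤ ∑ k ∈ range (N + 1), V (a k) + c * r ^ 2 / 64 := by
        rw [hEdef]
        simp only
        rw [hQa N hKN]
        have : ε / 2 * QK ≤ c * r ^ 2 / 64 := by linarith
        linarith
      have hcr : 0 < c * r ^ 2 := by positivity
      have h64 : ∑ k ∈ range (N + 1), V (a k) + c * r ^ 2 / 64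
          < ∑ k ∈ range (N + 1), V (a k) + c / 4 * (r ^ 2 / 4) := by
        nlinarith
      have : E a < E m := lt_of_le_of_lt hEa_ub (lt_of_lt_of_le h64 hEm_lb)
      exact absurd hEma (not_le.mpr this)
    -- the Euler-Lagrange equations
    have heq : ∀ n, n < N + 1 → ε * Aop m n + deriv V (m n) = 0 := by
      intro n hn
      have hψc : Continuous (fun t : ℝ => ∑ i ∈ range (N + 1),
          (Function.update m n t i - l0 i) ^ 2) := by
        apply continuous_finset_sum
        intro i _
        have : (fun t : ℝ => (Function.update m n t i - l0 i) ^ 2)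
            = fun t => ((if i = n then t else m i) - l0 i) ^ 2 := by
          funext t; rw [Function.update_apply]
        rw [this]
        by_cases hi : i = n
        · simp only [if_pos hi]
          exact (continuous_id.sub continuous_const).pow 2
        · simp only [if_neg hi]
          exact continuous_const
      have hev : ∀ᶠ t in 𝓝 (m n), ∑ i ∈ range (N + 1),
          (Function.update m n t i - l0 i) ^ 2 < r ^ 2 := by
        apply hψc.continuousAt.eventually_lt continuousAt_const
        simpa [Function.update_eq_self] using hstrict
      have hloc : IsLocalMin (fun t => E (Function.update m n t)) (m n) := by
        have hevE : ∀ᶠ t in 𝓝 (m n), E m ≤ E (Function.update m n t) := by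
          filter_upwards [hev] with t ht
          apply hmin'
          constructor
          · intro k hk
            rw [Function.update_apply, if_neg (by omega)]
            exact hm0 k hk
          · exact ht.le
        filter_upwards [hevE] with t ht
        show E (Function.update m n (m n)) ≤ E (Function.update m n t)
        rw [Function.update_eq_self]
        exact ht
      have hder : HasDerivAt (fun t => E (Function.update m n t))
          (ε * Aop m n + deriv V (m n)) (m n) := gms_hasDeriv V hV ε N n hn m
      have h0 := hloc.deriv_eq_zero
      rw [hder.deriv] at h0
      exact h0
    exact ⟨m, hm0, hmsum, heq⟩
  -- extract a convergent subsequence of minimizers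
  have hEx2 : ∀ j : ℕ, ∃ m : ℕ → ℝ,
      (∀ k, K + j < k → m k = 0) ∧
      (∑ i ∈ range (K + j + 1), (m i - l0 i) ^ 2 ≤ r ^ 2) ∧
      (∀ n, n < K + j + 1 → ε * Aop m n + deriv V (m n) = 0) :=
    fun j => hexists (K + j) (Nat.le_add_right K j)
  choose ms hms1 hms2 hms3 using hEx2
  have hmemS : ∀ j, ms j ∈ Set.pi univ (fun n => Icc (-(|l0 n| + r)) (|l0 n| + r)) := by
    intro j i _
    simp only [Set.mem_Icc]
    by_cases hi : i < K + j + 1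
    · have hone : (ms j i - l0 i) ^ 2 ≤ r ^ 2 :=
        le_trans (Finset.single_le_sum (f := fun k => (ms j k - l0 k) ^ 2)
          (fun k _ => sq_nonneg _) (Finset.mem_range.mpr hi)) (hms2 j)
      have habs' := abs_le.mp (gms_abs_le _ _ hr.le hone)
      constructor
      · linarith [neg_abs_le (l0 i), habs'.1]
      · linarith [le_abs_self (l0 i), habs'.2]
    · rw [hms1 j i (by omega)]
      have h0 : (0:ℝ) ≤ |l0 i| + r := by positivity
      constructor <;> linarith
  obtain ⟨l, hlS, φ, hφ, hconv⟩ :=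
    (isCompact_univ_pi (fun n => isCompact_Icc
      (a := -(|l0 n| + r)) (b := |l0 n| + r))).isSeqCompact.subseq_of_frequently_in
      (Frequently.of_forall hmemS)
  have hcoord : ∀ n, Tendsto (fun j => ms (φ j) n) atTop (𝓝 (l n)) :=
    fun n => (tendsto_pi_nhds.mp hconv) n
  -- the limit satisfies the equations
  have hleq : ∀ n, ε * Aop l n + deriv V (l n) = 0 := by
    intro n
    have htend : Tendsto (fun j => ε * Aop (ms (φ j)) n + deriv V (ms (φ j) n)) atTop
        (𝓝 (ε * Aop l n + deriv V (l n))) := by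
      apply Tendsto.add
      · apply Tendsto.const_mul
        simp only [Aop]
        exact (((hcoord n).const_mul _).sub ((hcoord (n + 1)).const_mul _)).sub
          ((hcoord (n - 1)).const_mul _)
      · exact (hVd.continuous.tendsto (l n)).comp (hcoord n)
    have hev0 : ∀ᶠ j in atTop, ε * Aop (ms (φ j)) n + deriv V (ms (φ j) n) = 0 := by
      filter_upwards [eventually_ge_atTop n] with j hj
      have hj2 : j ≤ φ j := hφ.le_apply
      exact hms3 (φ j) n (by omega)
    have h0 : Tendsto (fun j => ε * Aop (ms (φ j)) n + deriv V (ms (φ j) n)) atTop (𝓝 0) :=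
      Tendsto.congr' (by filter_upwards [hev0] with j hj; exact hj.symm) tendsto_const_nhds
    exact tendsto_nhds_unique htend h0
  -- the limit satisfies the norm bounds
  have hsums : ∀ M : ℕ, ∑ i ∈ range M, (l i - l0 i) ^ 2 ≤ r ^ 2 := by
    intro M
    have htd : Tendsto (fun j => ∑ i ∈ range M, (ms (φ j) i - l0 i) ^ 2) atTop
        (𝓝 (∑ i ∈ range M, (l i - l0 i) ^ 2)) := by
      apply tendsto_finset_sum
      intro i _
      exact ((hcoord i).sub_const (l0 i)).pow 2
    apply le_of_tendsto htd
    filter_upwards [eventually_ge_atTop M] with j hj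
    calc ∑ i ∈ range M, (ms (φ j) i - l0 i) ^ 2
        ≤ ∑ i ∈ range (K + φ j + 1), (ms (φ j) i - l0 i) ^ 2 := by
          apply Finset.sum_le_sum_of_subset_of_nonneg
          · apply Finset.range_subset_range.mpr
            have hj2 : j ≤ φ j := hφ.le_apply
            omega
          · intro i _ _
            exact sq_nonneg _
      _ ≤ r ^ 2 := hms2 (φ j)
  have hsummable : Summable (fun n => (l n - l0 n) ^ 2) :=
    summable_of_sum_range_le (fun n => sq_nonneg _) hsums
  have htsum : ∑' n, (l n - l0 n) ^ 2 ≤ r ^ 2 :=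
    hsummable.tsum_le_of_sum_range_le hsums
  -- uniqueness of solutions in the ball
  have key : ∀ p q : ℕ → ℝ,
      Summable (fun n => (p n - l0 n) ^ 2) → (∑' n, (p n - l0 n) ^ 2 ≤ r ^ 2) →
      (∀ n, ε * Aop p n + deriv V (p n) = 0) →
      Summable (fun n => (q n - l0 n) ^ 2) → (∑' n, (q n - l0 n) ^ 2 ≤ r ^ 2) →
      (∀ n, ε * Aop q n + deriv V (q n) = 0) →
      p = q := by
    intro p q hps hpt hpe hqs hqt hqe
    have hpb : ∀ n, p n ∈ Icc (l0 n - r) (l0 n + r) := by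
      intro n
      have h1 : (p n - l0 n) ^ 2 ≤ r ^ 2 :=
        le_trans (Summable.le_tsum hps n (fun j _ => sq_nonneg _)) hpt
      have := abs_le.mp (gms_abs_le _ _ hr.le h1)
      exact ⟨by linarith [this.1], by linarith [this.2]⟩
    have hqb : ∀ n, q n ∈ Icc (l0 n - r) (l0 n + r) := by
      intro n
      have h1 : (q n - l0 n) ^ 2 ≤ r ^ 2 :=
        le_trans (Summable.le_tsum hqs n (fun j _ => sq_nonneg _)) hqt
      have := abs_le.mp (gms_abs_le _ _ hr.le h1)
      exact ⟨by linarith [this.1], by linarith [this.2]⟩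
    have hdsq : Summable (fun n => (p n - q n) ^ 2) := by
      apply Summable.of_nonneg_of_le (fun n => sq_nonneg _) (fun n => ?_)
        ((hps.add hqs).mul_left 2)
      have : (p n - q n) ^ 2 ≤ 2 * ((p n - l0 n) ^ 2 + (q n - l0 n) ^ 2) := by
        nlinarith [sq_nonneg ((p n - l0 n) + (q n - l0 n))]
      exact this
    have hmono : ∀ n, c / 2 * (p n - q n) ^ 2
        ≤ (deriv V (p n) - deriv V (q n)) * (p n - q n) := by
      intro n
      exact gms_mono_mul V hV (c / 2) (l0 n - r) (l0 n + r) (hIccppr n)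
        (q n) (hqb n) (p n) (hpb n)
    have hest : ∀ N : ℕ, c / 2 * ∑ n ∈ range (N + 1), (p n - q n) ^ 2
        ≤ ε / 2 * (((N : ℝ) + 1) * ((p N - q N) ^ 2 + (p (N + 1) - q (N + 1)) ^ 2)) := by
      intro N
      obtain ⟨d, hd⟩ : ∃ d : ℕ → ℝ, d = fun n => p n - q n := ⟨_, rfl⟩
      have hdn : ∀ n, p n - q n = d n := fun n => by rw [hd]
      simp only [hdn]
      have hAd : ∀ n, Aop d n = Aop p n - Aop q n := by
        intro n
        simp only [hd, Aop]
        ring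
      have hmono' : ∀ n, c / 2 * d n ^ 2 ≤ (deriv V (p n) - deriv V (q n)) * d n := by
        intro n
        have := hmono n
        rw [hdn n] at this
        exact this
      have hsum : ε * ∑ n ∈ range (N + 1), Aop d n * d n
          = - ∑ n ∈ range (N + 1), (deriv V (p n) - deriv V (q n)) * d n := by
        rw [Finset.mul_sum, ← Finset.sum_neg_distrib]
        apply Finset.sum_congr rfl
        intro n _
        have h1 := hpe n
        have h2 := hqe n
        rw [hAd n]
        linear_combination (d n) * h1 - (d n) * h2
      have hsbp := gms_sbp d N
      have hlow : c / 2 * ∑ n ∈ range (N + 1), d n ^ 2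
          ≤ ∑ n ∈ range (N + 1), (deriv V (p n) - deriv V (q n)) * d n := by
        rw [Finset.mul_sum]
        exact Finset.sum_le_sum (fun n _ => hmono' n)
      have hQ0 : 0 ≤ ∑ n ∈ range N, ((n : ℝ) + 1) * (d n - d (n + 1)) ^ 2 :=
        Finset.sum_nonneg (fun n _ => by positivity)
      have hb1 : ε * ∑ n ∈ range (N + 1), Aop d n * d n
          ≤ - (c / 2 * ∑ n ∈ range (N + 1), d n ^ 2) := by
        rw [hsum]
        linarith
      rw [hsbp] at hb1
      have hN1 : (0:ℝ) ≤ (N : ℝ) + 1 := by positivity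
      have hkey : - (ε * (((N : ℝ) + 1) * d N * (d N - d (N + 1))))
          ≤ ε / 2 * (((N : ℝ) + 1) * (d N ^ 2 + d (N + 1) ^ 2)) := by
        have e1 : 0 ≤ ε * (((N : ℝ) + 1) * (d N - d (N + 1)) ^ 2) :=
          mul_nonneg hε0 (mul_nonneg hN1 (sq_nonneg _))
        have e2 : 0 ≤ ε * (((N : ℝ) + 1) * d N ^ 2) :=
          mul_nonneg hε0 (mul_nonneg hN1 (sq_nonneg _))
        nlinarith [e1, e2]
      have hQ2 : 0 ≤ ε * ∑ n ∈ range N, ((n : ℝ) + 1) * (d n - d (n + 1)) ^ 2 :=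
        mul_nonneg hε0 hQ0
      have hfin : c / 2 * ∑ n ∈ range (N + 1), d n ^ 2
          ≤ - (ε * (((N : ℝ) + 1) * d N * (d N - d (N + 1)))) := by
        nlinarith [hb1, hQ2]
      exact le_trans hfin hkey
    have hzero : ∀ n0, p n0 - q n0 = 0 := by
      intro n0
      by_contra hne
      have hpos' : 0 < ∑ i ∈ range (n0 + 1), (p i - q i) ^ 2 := by
        have h1 : 0 < (p n0 - q n0) ^ 2 := by positivity
        have h2 : (p n0 - q n0) ^ 2 ≤ ∑ i ∈ range (n0 + 1), (p i - q i) ^ 2 :=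
          Finset.single_le_sum (f := fun i => (p i - q i) ^ 2)
            (fun i _ => sq_nonneg _) (Finset.self_mem_range_succ n0)
        linarith
      have hη : 0 < c * (∑ i ∈ range (n0 + 1), (p i - q i) ^ 2) / (2 * (ε + 1)) := by
        positivity
      obtain ⟨N, hN1, hN2⟩ := gms_small (fun n => (p n - q n) ^ 2) hdsq
        (fun n => sq_nonneg _) _ hη n0
      have h1 := hest N
      have h2 : ∑ i ∈ range (n0 + 1), (p i - q i) ^ 2
          ≤ ∑ i ∈ range (N + 1), (p i - q i) ^ 2 := by
        apply Finset.sum_le_sum_of_subset_of_nonneg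
        · exact Finset.range_subset_range.mpr (by omega)
        · intro i _ _; exact sq_nonneg _
      have h3 : ε / 2 * (((N : ℝ) + 1) * ((p N - q N) ^ 2 + (p (N + 1) - q (N + 1)) ^ 2))
          ≤ ε / 2 * (c * (∑ i ∈ range (n0 + 1), (p i - q i) ^ 2) / (2 * (ε + 1))) :=
        mul_le_mul_of_nonneg_left hN2 (by linarith)
      set S0 := ∑ i ∈ range (n0 + 1), (p i - q i) ^ 2 with hS0def
      have h4 : c / 2 * S0 ≤ ε / 2 * (c * S0 / (2 * (ε + 1))) := by
        calc c / 2 * S0 ≤ c / 2 * ∑ i ∈ range (N + 1), (p i - q i) ^ 2 := by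
              apply mul_le_mul_of_nonneg_left h2 (by linarith)
          _ ≤ _ := le_trans h1 h3
      have hcS : 0 < c * S0 := by positivity
      have hx : (0:ℝ) < 2 * (ε + 1) := by linarith
      have hy : 0 < c * S0 / (2 * (ε + 1)) := div_pos hcS hx
      have hy2 : c * S0 / (2 * (ε + 1)) * (2 * (ε + 1)) = c * S0 :=
        div_mul_cancel₀ _ (ne_of_gt hx)
      have hm1 : 0 ≤ ε * (c * S0 / (2 * (ε + 1))) := mul_nonneg hε0 hy.le
      linarith [hy, hy2, hm1]
    funext n
    have := hzero n
    linarith [this]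
  refine ⟨l, ⟨hsummable, htsum, hleq⟩, ?_⟩
  rintro l' ⟨hs', ht', he'⟩
  exact key l' l hs' ht' he' hsummable htsum hleq
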